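/- arXiv:2104.09363 — 4 statements merged into one kernel-verified Lean document; each statement's English description precedes it below -/
import Mathlib

section
/- For tensors A in ⊗_{k=1}^p ℝ^{m_k} and B in ⊗_{l=1}^q ℝ^{n_l}, the spectral norm of the Kronecker product satisfies ‖A⊗B‖_σ = ‖A‖_σ · ‖B‖_σ. -/
open scoped BigOperators

/-- Spectral norm of a tensor with modes indexed by a finite type `J`,
mode `j` having dimension `n j`. -/
noncomputable def specNorm {J : Type*} [Fintype J] [DecidableEq J] {n : J → ℕ}
    (T : (∀ j, Fin (n j)) → ℝ) : ℝ :=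
  sSup { r | ∃ x : ∀ j, EuclideanSpace ℝ (Fin (n j)),
    (∀ j, ‖x j‖ = 1) ∧ r = |∑ i, T i * ∏ j, x j (i j)| }

/-! The pairing of `A ⊗ B` with a rank-one tensor `x` over the disjoint union of the modes is
the product of the pairings of `A` and `B` with the two halves of `x`, and unit families over a
disjoint union are exactly pairs of unit families. So the spectral norm of `A ⊗ B` is the supremum
of `|⟨A, y⟩| * |⟨B, z⟩|` over independent unit families `y`, `z`, which for nonnegative bounded
quantities is the product of the two suprema. -/

open Set

theorem Real.iSup_mul_iSup_of_nonneg {ι κ : Type*} {f : ι → ℝ} {g : κ → ℝ}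
    (hf₀ : ∀ i, 0 ≤ f i) (hg₀ : ∀ j, 0 ≤ g j)
    (hf : BddAbove (range f)) (hg : BddAbove (range g)) :
    (⨆ i, f i) * (⨆ j, g j) = ⨆ p : ι × κ, f p.1 * g p.2 := by
  have hfg : BddAbove (range fun p : ι × κ => f p.1 * g p.2) := by
    refine ⟨(⨆ i, f i) * ⨆ j, g j, ?_⟩
    rintro _ ⟨⟨i, j⟩, rfl⟩
    exact mul_le_mul (le_ciSup hf i) (le_ciSup hg j) (hg₀ j) (Real.iSup_nonneg hf₀)
  rw [ciSup_prod hfg, Real.iSup_mul_of_nonneg (Real.iSup_nonneg hg₀)]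
  simp_rw [Real.mul_iSup_of_nonneg (hf₀ _)]

section Tensor

variable {J : Type*} [Fintype J] [DecidableEq J] {n : J → ℕ}

/-- The pairing `⟨T, x₁ ⊗ ⋯ ⊗ x_d⟩` of a tensor with a rank-one tensor. -/
def tensorPairing (T : (∀ j, Fin (n j)) → ℝ) (x : ∀ j, EuclideanSpace ℝ (Fin (n j))) : ℝ :=
  ∑ i, T i * ∏ j, x j (i j)

abbrev UnitFamily (n : J → ℕ) : Type _ :=
  {x : ∀ j, EuclideanSpace ℝ (Fin (n j)) // ∀ j, ‖x j‖ = 1}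

theorem specNorm_eq_iSup (T : (∀ j, Fin (n j)) → ℝ) :
    specNorm T = ⨆ x : UnitFamily n, |tensorPairing T x.1| := by
  rw [specNorm, iSup]
  congr 1
  ext r
  exact ⟨fun ⟨x, hx, hr⟩ => ⟨⟨x, hx⟩, hr.symm⟩, fun ⟨x, hr⟩ => ⟨x.1, x.2, hr.symm⟩⟩

theorem abs_tensorPairing_le (T : (∀ j, Fin (n j)) → ℝ) (x : UnitFamily n) :
    |tensorPairing T x.1| ≤ ∑ i, |T i| := by
  have hprod (i : ∀ j, Fin (n j)) : |∏ j, x.1 j (i j)| ≤ 1 := by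
    rw [Finset.abs_prod]
    refine Finset.prod_le_one (fun j _ => abs_nonneg _) fun j _ => ?_
    simpa [x.2 j] using PiLp.norm_apply_le (x.1 j) (i j)
  calc |tensorPairing T x.1| ≤ ∑ i, |T i| * |∏ j, x.1 j (i j)| := by
        simpa only [tensorPairing, abs_mul] using
          Finset.abs_sum_le_sum_abs (fun i => T i * ∏ j, x.1 j (i j)) Finset.univ
    _ ≤ ∑ i, |T i| :=
        Finset.sum_le_sum fun i _ => mul_le_of_le_one_right (abs_nonneg _) (hprod i)

theorem bddAbove_range_abs_tensorPairing (T : (∀ j, Fin (n j)) → ℝ) :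
    BddAbove (range fun x : UnitFamily n => |tensorPairing T x.1|) :=
  ⟨_, forall_mem_range.2 (abs_tensorPairing_le T)⟩

end Tensor

section Kronecker

variable {I J : Type*} [Fintype I] [DecidableEq I] [Fintype J] [DecidableEq J]
  {m : I → ℕ} {n : J → ℕ}

theorem tensorPairing_kron (A : (∀ k, Fin (m k)) → ℝ) (B : (∀ l, Fin (n l)) → ℝ)
    (x : ∀ j : I ⊕ J, EuclideanSpace ℝ (Fin (Sum.elim m n j))) :
    tensorPairing (n := Sum.elim m n)
        (fun i => A (fun k => i (Sum.inl k)) * B (fun l => i (Sum.inr l))) x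
      = tensorPairing A (fun k => x (Sum.inl k)) * tensorPairing B (fun l => x (Sum.inr l)) := by
  simp only [tensorPairing]
  rw [Finset.sum_mul_sum, ← Fintype.sum_prod_type']
  refine Fintype.sum_equiv (Equiv.sumPiEquivProdPi _) _ _ fun i => ?_
  rw [Fintype.prod_sum_type]
  simp only [Equiv.sumPiEquivProdPi_apply]
  ring

def UnitFamily.sumEquiv : UnitFamily (Sum.elim m n) ≃ UnitFamily m × UnitFamily n where
  toFun x :=
    (⟨fun k => x.1 (Sum.inl k), fun k => x.2 _⟩, ⟨fun l => x.1 (Sum.inr l), fun l => x.2 _⟩)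
  invFun y := ⟨Sum.rec y.1.1 y.2.1, Sum.rec y.1.2 y.2.2⟩
  left_inv x := Subtype.ext <| funext fun j => by cases j <;> rfl
  right_inv _ := rfl

end Kronecker

/-- The spectral norm of the Kronecker product of two tensors equals
the product of their spectral norms. -/
theorem specNorm_kron {p q : ℕ} {m : Fin p → ℕ} {n : Fin q → ℕ}
    (A : (∀ k, Fin (m k)) → ℝ) (B : (∀ l, Fin (n l)) → ℝ) :
    specNorm (n := Sum.elim m n)
      (fun i : ∀ j : Fin p ⊕ Fin q, Fin (Sum.elim m n j) =>
        A (fun k => i (Sum.inl k)) * B (fun l => i (Sum.inr l)))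
      = specNorm A * specNorm B := by
  rw [specNorm_eq_iSup, specNorm_eq_iSup, specNorm_eq_iSup,
    Real.iSup_mul_iSup_of_nonneg (fun _ => abs_nonneg _) (fun _ => abs_nonneg _)
      (bddAbove_range_abs_tensorPairing A) (bddAbove_range_abs_tensorPairing B),
    ← UnitFamily.sumEquiv.symm.iSup_comp]
  simp only [tensorPairing_kron, abs_mul]
  rfl
end

section
/- For a homogeneous polynomial f of degree p in n real variables and any c ∈ ℝ^n, |f(c)| ≤ ‖f‖_HS · ‖c‖₂^p; moreover for c ≠ 0, equality holds if and only if f(x) = a(cᵀx)^p for some a ∈ ℝ. -/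
open scoped BigOperators
open MvPolynomial

/-- The Bombieri (Hilbert–Schmidt) norm of a homogeneous polynomial of degree `p`:
`‖f‖_HS² = ∑ (p!/(j₁!⋯jₙ!)) φ_j²`, where `f = ∑ (p!/(j₁!⋯jₙ!)) φ_j x^j`; equivalently,
in terms of the monomial coefficients of `f`,
`‖f‖_HS² = ∑_d (∏ᵢ (dᵢ)! / p!) (coeff d f)²`. -/
noncomputable def bombieriNorm {n : ℕ} (p : ℕ) (f : MvPolynomial (Fin n) ℝ) : ℝ :=
  Real.sqrt (∑ d ∈ f.support,
    ((∏ i, (Nat.factorial (d i) : ℝ)) / (Nat.factorial p : ℝ)) * (f.coeff d) ^ 2)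

/-- The `p`-th power of the linear form `x ↦ cᵀx`, as a polynomial. -/
noncomputable def linPow {n : ℕ} (c : Fin n → ℝ) (p : ℕ) : MvPolynomial (Fin n) ℝ :=
  (∑ i, MvPolynomial.C (c i) * MvPolynomial.X i) ^ p


/-- The spectral (sigma) norm of a polynomial: the sup of `|f(x)|` over the unit sphere. -/
noncomputable def sigmaNorm {n : ℕ} (f : MvPolynomial (Fin n) ℝ) : ℝ :=
  sSup { r | ∃ x : EuclideanSpace ℝ (Fin n), ‖x‖ = 1 ∧
    r = |MvPolynomial.eval (fun i => x i) f| }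

/-!
Rescaling the coefficient of `x^d` by `√(d!/p!)` turns the Bombieri norm into a Euclidean norm.
In these coordinates `(cᵀx)^p` is a reproducing kernel: by the multinomial theorem its rescaled
coefficients are `√(p!/d!) cᵈ`, so its inner product with a degree-`p` form `f` is `f(c)`, and
taking `f = (cᵀx)^p` gives its norm `‖c‖^p`. The inequality is then Cauchy–Schwarz, and its
equality case says that `f` is a multiple of `(cᵀx)^p`.
-/

open scoped InnerProductSpace

theorem abs_real_inner_eq_norm_mul_norm_iff {F : Type*} [NormedAddCommGroup F]
    [InnerProductSpace ℝ F] {x : F} (hx : x ≠ 0) (y : F) :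
    |⟪x, y⟫_ℝ| = ‖x‖ * ‖y‖ ↔ ∃ r : ℝ, y = r • x := by
  have := (norm_inner_eq_norm_tfae ℝ x y).out 0 2
  rwa [Real.norm_eq_abs, or_iff_right hx] at this

section

variable {σ : Type*} [Fintype σ]

noncomputable def bombieriWeight (p : ℕ) (d : σ →₀ ℕ) : ℝ :=
  (∏ i, ((d i).factorial : ℝ)) / (p.factorial : ℝ)

theorem bombieriWeight_pos (p : ℕ) (d : σ →₀ ℕ) : 0 < bombieriWeight p d := by
  unfold bombieriWeight; positivity

noncomputable def bombieriVec (p : ℕ) (S : Finset (σ →₀ ℕ)) :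
    MvPolynomial σ ℝ →ₗ[ℝ] EuclideanSpace ℝ S where
  toFun f := WithLp.toLp 2 fun d => √(bombieriWeight p d.1) * f.coeff d.1
  map_add' f g := by ext d; simp [mul_add]
  map_smul' a f := by ext d; simp [mul_left_comm]

theorem inner_bombieriVec (p : ℕ) {S : Finset (σ →₀ ℕ)} {f : MvPolynomial σ ℝ}
    (hf : f.support ⊆ S) (g : MvPolynomial σ ℝ) :
    ⟪bombieriVec p S f, bombieriVec p S g⟫_ℝ =
      ∑ d ∈ f.support, bombieriWeight p d * f.coeff d * g.coeff d := by
  calc ⟪bombieriVec p S f, bombieriVec p S g⟫_ℝ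
      = ∑ d ∈ S, bombieriWeight p d * f.coeff d * g.coeff d := by
        rw [PiLp.inner_apply, ← Finset.sum_coe_sort S]
        refine Finset.sum_congr rfl fun d _ => ?_
        have hw := Real.mul_self_sqrt (bombieriWeight_pos p d.1).le
        simp only [bombieriVec, LinearMap.coe_mk, AddHom.coe_mk, PiLp.toLp_apply,
          RCLike.inner_apply, conj_trivial]
        linear_combination (f.coeff d.1 * g.coeff d.1) * hw
    _ = ∑ d ∈ f.support, bombieriWeight p d * f.coeff d * g.coeff d :=
        (Finset.sum_subset hf fun d _ hd => by rw [notMem_support_iff.1 hd]; ring).symm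

theorem bombieriVec_injOn (p : ℕ) (S : Finset (σ →₀ ℕ)) :
    Set.InjOn (bombieriVec p S) {f | f.support ⊆ S} := by
  intro f hf g hg hfg
  ext d
  by_cases hd : d ∈ S
  · have h := congrArg (fun v : EuclideanSpace ℝ S => v ⟨d, hd⟩) hfg
    exact mul_left_cancel₀ (Real.sqrt_pos.2 (bombieriWeight_pos p d)).ne' h
  · rw [notMem_support_iff.1 fun h => hd (hf h), notMem_support_iff.1 fun h => hd (hg h)]

end

section

variable {n p : ℕ}

theorem norm_bombieriVec {S : Finset (Fin n →₀ ℕ)} {f : MvPolynomial (Fin n) ℝ}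
    (hf : f.support ⊆ S) : ‖bombieriVec p S f‖ = bombieriNorm p f := by
  rw [norm_eq_sqrt_real_inner, inner_bombieriVec p hf, bombieriNorm]
  simp only [mul_assoc, sq]
  rfl

theorem bombieriWeight_mul_coeff_linPow (c : Fin n → ℝ) {d : Fin n →₀ ℕ} (hd : d.degree = p) :
    bombieriWeight p d * (linPow c p).coeff d = ∏ i, c i ^ d i := by
  have hspec := Nat.multinomial_spec Finset.univ d
  rw [← Finsupp.degree_eq_sum, hd] at hspec
  simp_rw [linPow, C_mul']
  rw [coeff_linearCombination_X_pow_of_fintype, if_pos (show d.sum (fun _ m => m) = p from hd),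
    Finsupp.multinomial_eq_of_support_subset (Finset.subset_univ _),
    Finsupp.prod_fintype _ _ fun i => pow_zero _, ← mul_assoc, bombieriWeight,
    div_mul_eq_mul_div, ← Nat.cast_prod, ← Nat.cast_mul, hspec, div_self (by positivity), one_mul]

theorem isHomogeneous_linPow (c : Fin n → ℝ) (p : ℕ) : (linPow c p).IsHomogeneous p := by
  simpa [linPow] using (IsHomogeneous.sum _ _ 1 fun i _ => isHomogeneous_C_mul_X (c i) i).pow p

theorem sum_bombieriWeight_mul_coeff_linPow {f : MvPolynomial (Fin n) ℝ} (hf : f.IsHomogeneous p)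
    (c : Fin n → ℝ) :
    ∑ d ∈ f.support, bombieriWeight p d * f.coeff d * (linPow c p).coeff d = eval c f := by
  rw [eval_eq']
  refine Finset.sum_congr rfl fun d hd => ?_
  rw [mul_right_comm, bombieriWeight_mul_coeff_linPow c (hf.degree_eq_sum_deg_support hd).symm,
    mul_comm]

theorem bombieriNorm_linPow (c : EuclideanSpace ℝ (Fin n)) (p : ℕ) :
    bombieriNorm p (linPow (fun i => c i) p) = ‖c‖ ^ p := by
  have heval : eval (fun i => c i) (linPow (fun i => c i) p) = (‖c‖ ^ 2) ^ p := by
    rw [EuclideanSpace.real_norm_sq_eq]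
    simp [linPow, sq]
  rw [← norm_bombieriVec subset_rfl, norm_eq_sqrt_real_inner, inner_bombieriVec p subset_rfl,
    sum_bombieriWeight_mul_coeff_linPow (isHomogeneous_linPow _ p), heval, ← pow_mul,
    mul_comm, pow_mul, Real.sqrt_sq (by positivity)]

end

/-- `|f(c)| ≤ ‖f‖_HS ‖c‖₂^p` for homogeneous `f` of degree `p`; for
`c ≠ 0` equality holds iff `f(x) = a (cᵀx)^p` for some `a ∈ ℝ`. -/
theorem abs_eval_le_bombieriNorm {n p : ℕ}
    (f : MvPolynomial (Fin n) ℝ) (hf : f.IsHomogeneous p)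
    (c : EuclideanSpace ℝ (Fin n)) :
    |MvPolynomial.eval (fun i => c i) f| ≤ bombieriNorm p f * ‖c‖ ^ p ∧
      (c ≠ 0 →
        (|MvPolynomial.eval (fun i => c i) f| = bombieriNorm p f * ‖c‖ ^ p ↔
          ∃ a : ℝ, f = MvPolynomial.C a * linPow (fun i => c i) p)) := by
  set L := linPow (fun i => c i) p
  set S := f.support ∪ L.support
  have hfS : f.support ⊆ S := Finset.subset_union_left
  have hLS : L.support ⊆ S := Finset.subset_union_right
  have heval : ⟪bombieriVec p S f, bombieriVec p S L⟫_ℝ = eval (fun i => c i) f := by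
    rw [inner_bombieriVec p hfS, sum_bombieriWeight_mul_coeff_linPow hf]
  have hnorm_f : ‖bombieriVec p S f‖ = bombieriNorm p f := norm_bombieriVec hfS
  have hnorm_L : ‖bombieriVec p S L‖ = ‖c‖ ^ p :=
    (norm_bombieriVec hLS).trans (bombieriNorm_linPow c p)
  rw [← heval, ← hnorm_f, ← hnorm_L, real_inner_comm, mul_comm]
  refine ⟨abs_real_inner_le_norm _ _, fun hc => ?_⟩
  have hL : bombieriVec p S L ≠ 0 := by
    rw [← norm_ne_zero_iff, hnorm_L]
    exact pow_ne_zero _ (norm_ne_zero_iff.2 hc)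
  rw [abs_real_inner_eq_norm_mul_norm_iff hL]
  refine exists_congr fun a => ?_
  rw [C_mul', ← map_smul]
  exact (bombieriVec_injOn p S).eq_iff hfS (support_smul.trans hLS)
end

section
/- Let f, g be homogeneous polynomials of degree p in n variables such that f has nonnegative coefficients φ_{j_1,...,j_n} majorizing the absolute values of the coefficients γ_{j_1,...,j_n} of g (i.e., φ ≥ |γ| entrywise). Then ‖f^k‖_HS ≥ ‖g^k‖_HS for every positive integer k. -/
open scoped BigOperators
open MvPolynomial

/-! Coefficientwise majorization `|coeff g| ≤ coeff f` is preserved by products, since each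
coefficient of a product is a sum of products of coefficients; so it passes from `g, f` to
`g ^ k, f ^ k`. The Bombieri norm is a sum of squared coefficients with nonnegative weights,
hence monotone under majorization. -/

section Majorization

variable {σ R : Type*} [CommRing R] [LinearOrder R] [IsStrictOrderedRing R]

theorem MvPolynomial.abs_coeff_mul_le_coeff_mul {g₁ g₂ f₁ f₂ : MvPolynomial σ R}
    (h₁ : ∀ d, |g₁.coeff d| ≤ f₁.coeff d) (h₂ : ∀ d, |g₂.coeff d| ≤ f₂.coeff d) (d : σ →₀ ℕ) :
    |(g₁ * g₂).coeff d| ≤ (f₁ * f₂).coeff d := by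
  classical
  rw [coeff_mul, coeff_mul]
  refine (Finset.abs_sum_le_sum_abs _ _).trans (Finset.sum_le_sum fun x _ => ?_)
  rw [abs_mul]
  exact mul_le_mul (h₁ x.1) (h₂ x.2) (abs_nonneg _) ((abs_nonneg _).trans (h₁ x.1))

theorem MvPolynomial.abs_coeff_pow_le_coeff_pow {g f : MvPolynomial σ R}
    (h : ∀ d, |g.coeff d| ≤ f.coeff d) (k : ℕ) (d : σ →₀ ℕ) :
    |(g ^ k).coeff d| ≤ (f ^ k).coeff d := by
  classical
  induction k generalizing d with
  | zero => rw [pow_zero, pow_zero, coeff_one]; split_ifs <;> simp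
  | succ k ih =>
    rw [pow_succ, pow_succ]
    exact abs_coeff_mul_le_coeff_mul ih h d

theorem MvPolynomial.support_subset_of_abs_coeff_le {g f : MvPolynomial σ R}
    (h : ∀ d, |g.coeff d| ≤ f.coeff d) : g.support ⊆ f.support := by
  intro d hd
  rw [mem_support_iff] at hd ⊢
  intro hf
  exact hd (abs_nonpos_iff.mp (hf ▸ h d))

end Majorization

theorem bombieriNorm_le_of_abs_coeff_le {n : ℕ} (p : ℕ) {g f : MvPolynomial (Fin n) ℝ}
    (h : ∀ d, |g.coeff d| ≤ f.coeff d) : bombieriNorm p g ≤ bombieriNorm p f := by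
  set w : (Fin n →₀ ℕ) → ℝ := fun d => (∏ i, ((d i).factorial : ℝ)) / (p.factorial : ℝ)
  have hw : ∀ d, 0 ≤ w d := fun d => by positivity
  apply Real.sqrt_le_sqrt
  calc ∑ d ∈ g.support, w d * g.coeff d ^ 2
      ≤ ∑ d ∈ g.support, w d * f.coeff d ^ 2 := by
        refine Finset.sum_le_sum fun d _ => mul_le_mul_of_nonneg_left ?_ (hw d)
        rw [← sq_abs]
        exact pow_le_pow_left₀ (abs_nonneg _) (h d) 2
    _ ≤ ∑ d ∈ f.support, w d * f.coeff d ^ 2 :=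
        Finset.sum_le_sum_of_subset_of_nonneg (support_subset_of_abs_coeff_le h)
          fun d _ _ => mul_nonneg (hw d) (sq_nonneg _)

theorem bombieriNorm_pow_mono_of_majorize_general {n p : ℕ}
    (f g : MvPolynomial (Fin n) ℝ)
    (hmaj : ∀ d : Fin n →₀ ℕ, |g.coeff d| ≤ f.coeff d) :
    ∀ k : ℕ, 0 < k →
      bombieriNorm (k * p) (g ^ k) ≤ bombieriNorm (k * p) (f ^ k) :=
  fun k _ => bombieriNorm_le_of_abs_coeff_le _ (abs_coeff_pow_le_coeff_pow hmaj k)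

/-- If the (nonnegative) coefficients of `f` majorize the absolute
values of the coefficients of `g` (both homogeneous of degree `p`), then
`‖f^k‖_HS ≥ ‖g^k‖_HS` for every positive integer `k`. -/
theorem bombieriNorm_pow_mono_of_majorize {n p : ℕ}
    (f g : MvPolynomial (Fin n) ℝ)
    (hf : f.IsHomogeneous p) (hg : g.IsHomogeneous p)
    (hmaj : ∀ d : Fin n →₀ ℕ, |g.coeff d| ≤ f.coeff d) :
    ∀ k : ℕ, 0 < k →
      bombieriNorm (k * p) (g ^ k) ≤ bombieriNorm (k * p) (f ^ k) :=
  bombieriNorm_pow_mono_of_majorize_general f g hmaj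
end

section
/- For nonnegative integers j_1,...,j_n with j_1+···+j_n = k and any integer q ≥ 2, the multinomial coefficients satisfy (k!/(j_1!···j_n!))² ≤ (k!/(j_1!···j_n!))^q ≤ (kq)!/((j_1 q)!···(j_n q)!). -/
/-!
Multinomial coefficients are super-multiplicative: `multinomial f * multinomial g ≤
multinomial (f + g)`. For binomial coefficients this is one term of Vandermonde's identity
`(m + n).choose (i + j) = ∑ m.choose a * n.choose b`, and the multinomial case follows by peeling
off one index at a time. Iterating gives `multinomial f ^ q ≤ multinomial (fun i ↦ f i * q)`,
and `multinomial f ^ 2 ≤ multinomial f ^ q` holds because multinomial coefficients are positive.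
-/

open Finset

namespace Nat

theorem choose_mul_choose_le_add_choose_add (m n i j : ℕ) :
    m.choose i * n.choose j ≤ (m + n).choose (i + j) := by
  rw [add_choose_eq]
  exact single_le_sum (f := fun ij : ℕ × ℕ => m.choose ij.1 * n.choose ij.2)
    (fun _ _ => Nat.zero_le _) (a := (i, j)) (mem_antidiagonal.mpr rfl)

variable {α : Type*}

theorem multinomial_mul_multinomial_le (s : Finset α) (f g : α → ℕ) :
    multinomial s f * multinomial s g ≤ multinomial s (f + g) := by
  induction s using Finset.cons_induction with
  | empty => simp
  | cons a s ha ih =>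
    simp only [multinomial_cons, Pi.add_apply, sum_add_distrib]
    calc (f a + ∑ i ∈ s, f i).choose (f a) * multinomial s f *
          ((g a + ∑ i ∈ s, g i).choose (g a) * multinomial s g)
        = (f a + ∑ i ∈ s, f i).choose (f a) * (g a + ∑ i ∈ s, g i).choose (g a) *
          (multinomial s f * multinomial s g) := by ring
      _ ≤ (f a + ∑ i ∈ s, f i + (g a + ∑ i ∈ s, g i)).choose (f a + g a) *
          multinomial s (f + g) :=
        Nat.mul_le_mul (choose_mul_choose_le_add_choose_add _ _ _ _) ih
      _ = (f a + g a + (∑ i ∈ s, f i + ∑ i ∈ s, g i)).choose (f a + g a) *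
          multinomial s (f + g) := by ring_nf

theorem multinomial_pow_le_multinomial_mul (s : Finset α) (f : α → ℕ) (q : ℕ) :
    multinomial s f ^ q ≤ multinomial s (fun i => f i * q) := by
  induction q with
  | zero => simp [multinomial]
  | succ q ih =>
    calc multinomial s f ^ (q + 1) = multinomial s f ^ q * multinomial s f := pow_succ _ _
      _ ≤ multinomial s (fun i => f i * q) * multinomial s f := Nat.mul_le_mul_right _ ih
      _ ≤ multinomial s ((fun i => f i * q) + f) := multinomial_mul_multinomial_le s _ f
      _ = multinomial s (fun i => f i * (q + 1)) := by simp only [Pi.add_def, Nat.mul_succ]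

end Nat

theorem multinomial_sq_le_pow_le_general {n q : ℕ} (hq : 2 ≤ q)
    (j : Fin n → ℕ) :
    Nat.multinomial Finset.univ j ^ 2 ≤ Nat.multinomial Finset.univ j ^ q ∧
    Nat.multinomial Finset.univ j ^ q ≤ Nat.multinomial Finset.univ (fun i => j i * q) :=
  ⟨Nat.pow_le_pow_right (Nat.multinomial_pos _ _) hq,
    Nat.multinomial_pow_le_multinomial_mul _ j q⟩

/-- For nonnegative integers `j₁,…,jₙ` with `∑ jᵢ = k` and `q ≥ 2`:
`(k!/(j₁!⋯jₙ!))² ≤ (k!/(j₁!⋯jₙ!))^q ≤ (kq)!/((j₁q)!⋯(jₙq)!)`. -/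
theorem multinomial_sq_le_pow_le {n k q : ℕ} (hq : 2 ≤ q)
    (j : Fin n → ℕ) (hj : ∑ i, j i = k) :
    Nat.multinomial Finset.univ j ^ 2 ≤ Nat.multinomial Finset.univ j ^ q ∧
    Nat.multinomial Finset.univ j ^ q ≤ Nat.multinomial Finset.univ (fun i => j i * q) :=
  multinomial_sq_le_pow_le_general hq j
end
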